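/- (NWJ / MINE-f lower bound) For random variables X, Y on finite sets with joint distribution p(x,y) and marginals p(x), p(y), and any function f: X × Y → ℝ, the mutual information satisfies I(X; Y) ≥ E_{p(x,y)}[f(x,y)] - e^{-1} E_{p(x)}E_{p(y)}[e^{f(x,y)}]. -/

import Mathlib

open Real Finset

/-- Write `q e^{t-1} = p e^u` with `u = t - 1 - log (p/q)` and apply `1 + u ≤ e^u`. -/
lemma mul_sub_inv_exp_one_mul_le_mul_log_div {p q : ℝ} (t : ℝ) (hp : 0 ≤ p) (hq : 0 ≤ q)
    (hpq : q = 0 → p = 0) :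
    p * t - (exp 1)⁻¹ * (q * exp t) ≤ p * log (p / q) := by
  obtain rfl | hq := hq.eq_or_lt
  · simp [hpq rfl]
  obtain rfl | hp := hp.eq_or_lt
  · simp only [zero_mul, zero_sub, neg_nonpos]
    positivity
  have hpq : 0 < p / q := div_pos hp hq
  have hexp : (exp 1)⁻¹ * (q * exp t) = p * exp (t - 1 - log (p / q)) := by
    rw [exp_sub, exp_sub, exp_log hpq]
    field_simp
  rw [hexp]
  nlinarith [mul_le_mul_of_nonneg_left (add_one_le_exp (t - 1 - log (p / q))) hp.le]

lemma sum_mul_sub_inv_exp_one_mul_le_sum_mul_log_div {ι : Type*} (s : Finset ι)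
    {p q : ι → ℝ} (t : ι → ℝ) (hp : ∀ i ∈ s, 0 ≤ p i) (hq : ∀ i ∈ s, 0 ≤ q i)
    (hpq : ∀ i ∈ s, q i = 0 → p i = 0) :
    ∑ i ∈ s, p i * t i - (exp 1)⁻¹ * ∑ i ∈ s, q i * exp (t i) ≤
      ∑ i ∈ s, p i * log (p i / q i) := by
  rw [mul_sum, ← sum_sub_distrib]
  exact sum_le_sum fun i hi ↦
    mul_sub_inv_exp_one_mul_le_mul_log_div (t i) (hp i hi) (hq i hi) (hpq i hi)

lemma eq_zero_of_marginals_mul_eq_zero {X Y : Type*} [Fintype X] [Fintype Y]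
    {p : X → Y → ℝ} (hp : ∀ x y, 0 ≤ p x y) {x : X} {y : Y}
    (h : (∑ y', p x y') * (∑ x', p x' y) = 0) : p x y = 0 := by
  refine le_antisymm ?_ (hp x y)
  rcases mul_eq_zero.mp h with h | h
  · exact h ▸ single_le_sum (fun y' _ ↦ hp x y') (mem_univ y)
  · exact h ▸ single_le_sum (fun x' _ ↦ hp x' y) (mem_univ x)

theorem nwj_lower_bound_general {X Y : Type*} [Fintype X] [Fintype Y]
    (p : X → Y → ℝ) (hnn : ∀ x y, 0 ≤ p x y)
    (f : X → Y → ℝ) :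
    ∑ x : X, ∑ y : Y, p x y *
        Real.log (p x y / ((∑ y' : Y, p x y') * (∑ x' : X, p x' y))) ≥
      (∑ x : X, ∑ y : Y, p x y * f x y) -
        (Real.exp 1)⁻¹ * ∑ x : X, ∑ y : Y,
          (∑ y' : Y, p x y') * (∑ x' : X, p x' y) * Real.exp (f x y) := by
  simp only [← Fintype.sum_prod_type']
  exact sum_mul_sub_inv_exp_one_mul_le_sum_mul_log_div univ (fun z : X × Y ↦ f z.1 z.2)
    (fun (z : X × Y) _ ↦ hnn z.1 z.2)
    (fun z _ ↦ mul_nonneg (sum_nonneg fun _ _ ↦ hnn _ _) (sum_nonneg fun _ _ ↦ hnn _ _))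
    (fun _ _ ↦ eq_zero_of_marginals_mul_eq_zero hnn)

/-- NWJ / MINE-f lower bound on mutual information: for any critic `f`,
`I(X;Y) ≥ E_{p(x,y)}[f] - e⁻¹ E_{p(x)}E_{p(y)}[e^f]`, for a joint pmf `p`
on finite sets with marginals `pX`, `pY`. -/
theorem nwj_lower_bound {X Y : Type*} [Fintype X] [Fintype Y]
    (p : X → Y → ℝ) (hnn : ∀ x y, 0 ≤ p x y)
    (hsum : ∑ x : X, ∑ y : Y, p x y = 1)
    (f : X → Y → ℝ) :
    ∑ x : X, ∑ y : Y, p x y *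
        Real.log (p x y / ((∑ y' : Y, p x y') * (∑ x' : X, p x' y))) ≥
      (∑ x : X, ∑ y : Y, p x y * f x y) -
        (Real.exp 1)⁻¹ * ∑ x : X, ∑ y : Y,
          (∑ y' : Y, p x y') * (∑ x' : X, p x' y) * Real.exp (f x y) :=
  nwj_lower_bound_general p hnn f
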